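/- arXiv:2012.10571 — 4 statements merged into one kernel-verified Lean document; each statement's English description precedes it below -/
import Mathlib

section
/- Let a,b,c,d ∈ R satisfy bdb = bac and dbd = acd. If ac − (ac)^{n+1} is nilpotent for some n ∈ ℕ, then bd − (bd)^{n+1} is nilpotent; consequently, if ac has a Zhou inverse then so does bd. -/
/-- x lies in the Jacobson radical: 1 - y*x is a unit for every y. -/
def inRadJ {R : Type*} [Ring R] (x : R) : Prop := ∀ y : R, IsUnit (1 - y * x)

/-- x ∈ √J(R): some power of x lies in the Jacobson radical. -/
def inSqrtJ {R : Type*} [Ring R] (x : R) : Prop := ∃ m : ℕ, 0 < m ∧ inRadJ (x ^ m)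

/-- x belongs to the double commutant of a. -/
def inComm2 {R : Type*} [Ring R] (a x : R) : Prop :=
  ∀ y : R, y * a = a * y → x * y = y * x

/-- b is a generalized Zhou inverse of a. -/
def IsGZhouInv {R : Type*} [Ring R] (a b : R) : Prop :=
  b * a * b = b ∧ inComm2 a b ∧ ∃ n : ℕ, 0 < n ∧ inSqrtJ (a ^ n - a * b)

/-- b is a Zhou inverse of a. -/
def IsZhouInv {R : Type*} [Ring R] (a b : R) : Prop :=
  b * a * b = b ∧ inComm2 a b ∧ ∃ n : ℕ, 0 < n ∧ IsNilpotent (a ^ n - a * b)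

/-- `(1-p)^m = 1 - p*g` for some `g`. -/
lemma aux_geom_compl {S : Type*} [CommRing S] (p : S) (m : ℕ) :
    ∃ g : S, (1 - p) ^ m = 1 - p * g := by
  induction m with
  | zero => exact ⟨0, by ring⟩
  | succ k ih =>
    obtain ⟨g, hg⟩ := ih
    refine ⟨1 + g - p * g, ?_⟩
    rw [pow_succ]
    linear_combination (1 - p) * hg

/-- In a commutative ring, if `z - z^(k+2)` is nilpotent then `z` has a "Zhou-type"
inverse `y` with `y z y = y` and `z^(k+1) - z*y` nilpotent. -/
lemma aux_zhou_comm {S : Type*} [CommRing S] (z : S) (k : ℕ)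
    (h : IsNilpotent (z - z ^ (k + 2))) :
    ∃ y : S, y * z * y = y ∧ IsNilpotent (z ^ (k + 1) - z * y) := by
  obtain ⟨m, hm⟩ := h
  rcases m with _ | l
  · haveI : Subsingleton S := subsingleton_of_zero_eq_one (by simpa using hm.symm)
    exact ⟨0, Subsingleton.elim _ _, ⟨1, Subsingleton.elim _ _⟩⟩
  set m := l + 1 with hmdef
  obtain ⟨g, hg⟩ := aux_geom_compl (z ^ (k + 1)) m
  have hz : z ^ m * (1 - z ^ (k + 1)) ^ m = 0 := by
    rw [← mul_pow, show z * (1 - z ^ (k + 1)) = z - z ^ (k + 2) by ring]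
    exact hm
  set x : S := z ^ k * g with hxdef
  have hx : z ^ m = z ^ (m + 1) * x := by
    have h0 : z ^ m * (1 - z ^ (k + 1) * g) = 0 := by rw [← hg]; exact hz
    linear_combination h0
  have hiter : ∀ j : ℕ, z ^ m = z ^ (m + j) * x ^ j := by
    intro j
    induction j with
    | zero => simp
    | succ i ih => linear_combination (z * x) * ih + hx
  refine ⟨z ^ m * x ^ (m + 1), ?_, ?_⟩
  · linear_combination (-(x ^ (m + 1))) * hiter (m + 1)
  · rw [← mem_nilradical]
    rw [← Ideal.Quotient.eq_zero_iff_mem]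
    set f := Ideal.Quotient.mk (nilradical S) with hfdef
    have hmem : z - z ^ (k + 2) ∈ nilradical S := mem_nilradical.mpr ⟨m, hm⟩
    have hw : f z = (f z) ^ (k + 2) := by
      have := Ideal.Quotient.eq_zero_iff_mem.mpr hmem
      rw [map_sub, map_pow, sub_eq_zero] at this
      exact this
    set w := f z with hwdef
    set h' := f g with hpdef
    have hp : w ^ (k + 1) * w ^ (k + 1) = w ^ (k + 1) := by
      linear_combination (-(w ^ k)) * hw
    have hgq : (1 - w ^ (k + 1)) ^ m = 1 - w ^ (k + 1) * h' := by
      have := congrArg f hg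
      simpa [map_sub, map_mul, map_pow, map_one] using this
    have hcompl : ∀ j : ℕ, (1 - w ^ (k + 1)) ^ (j + 1) = 1 - w ^ (k + 1) := by
      intro j
      induction j with
      | zero => rw [pow_one]
      | succ i ih =>
        rw [pow_succ]
        linear_combination (1 - w ^ (k + 1)) * ih + hp
    have hph : w ^ (k + 1) * h' = w ^ (k + 1) := by
      have h2 := (hcompl l).symm.trans hgq
      linear_combination h2
    have hq : ∀ j : ℕ, (w ^ (k + 1) * h') ^ (j + 1) = w ^ (k + 1) := by
      intro j
      induction j with
      | zero => rw [pow_one]; exact hph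
      | succ i ih =>
        rw [pow_succ]
        linear_combination (w ^ (k + 1) * h') * ih + h' * hp + hph
    have key : f (z ^ (k + 1) - z * (z ^ m * x ^ (m + 1))) =
        w ^ (k + 1) - w * (w ^ m * ((w ^ k * h') ^ (m + 1))) := by
      simp [hxdef, map_sub, map_mul, map_pow]; rfl
    rw [key]
    have e : w * (w ^ m * (w ^ k * h') ^ (m + 1)) = w ^ (k + 1) := by
      calc w * (w ^ m * (w ^ k * h') ^ (m + 1))
          = (w * w ^ m) * (w ^ k * h') ^ (m + 1) := by rw [← mul_assoc]
        _ = w ^ (m + 1) * (w ^ k * h') ^ (m + 1) := by rw [← pow_succ']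
        _ = (w * (w ^ k * h')) ^ (m + 1) := (mul_pow _ _ _).symm
        _ = (w ^ (k + 1) * h') ^ (m + 1) := by rw [← mul_assoc, ← pow_succ']
        _ = w ^ (k + 1) := hq m
    rw [e, sub_self]

/-- In any ring, if `z - z^(k+2)` is nilpotent then `z` has a Zhou inverse. -/
lemma aux_zhou_exists {R : Type*} [Ring R] (z : R) (k : ℕ)
    (h : IsNilpotent (z - z ^ (k + 2))) :
    ∃ y : R, y * z * y = y ∧ inComm2 z y ∧ IsNilpotent (z ^ (k + 1) - z * y) := by
  set T : Subring R := Subring.closure {z} with hT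
  letI : CommRing T := Subring.closureCommRingOfComm (by rintro x rfl y rfl; rfl)
  have hzT : z ∈ T := Subring.subset_closure rfl
  have hnilT : IsNilpotent ((⟨z, hzT⟩ : T) - (⟨z, hzT⟩ : T) ^ (k + 2)) := by
    obtain ⟨m, hm⟩ := h
    exact ⟨m, Subtype.ext (show ((z - z ^ (k + 2)) ^ m : R) = 0 from hm)⟩
  obtain ⟨y, hy1, hy2⟩ := aux_zhou_comm (⟨z, hzT⟩ : T) k hnilT
  refine ⟨(y : R), ?_, ?_, ?_⟩
  · exact (show ((y : R) * z * (y : R) : R) = (y : R) from congrArg Subtype.val hy1)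
  · intro w hw
    have hyc := Subring.closure_le_centralizer_centralizer {z} y.2
    have hwc : w ∈ Set.centralizer ({z} : Set R) := by
      rintro v rfl; exact hw.symm
    exact (Subring.mem_centralizer_iff.mp hyc w hwc).symm
  · obtain ⟨m, hm⟩ := hy2
    exact ⟨m, show ((z ^ (k + 1) - z * (y : R)) ^ m : R) = 0 from congrArg Subtype.val hm⟩

theorem stmt16 {R : Type*} [Ring R] (a b c d : R) (n : ℕ) (hn : 0 < n)
    (h1 : b * d * b = b * (a * c)) (h2 : d * b * d = a * c * d)
    (hnil : IsNilpotent (a * c - (a * c) ^ (n + 1))) :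
    IsNilpotent (b * d - (b * d) ^ (n + 1)) ∧
      ((∃ x : R, IsZhouInv (a * c) x) → ∃ y : R, IsZhouInv (b * d) y) := by
  have hmain : IsNilpotent (b * d - (b * d) ^ (n + 1)) := by
    have h1' : b * (d * b) = b * (a * c) := by rw [← mul_assoc]; exact h1
    have hc : Commute (a * c) (d * b) := by
      show a * c * (d * b) = d * b * (a * c)
      calc a * c * (d * b) = a * c * d * b := (mul_assoc _ _ _).symm
        _ = d * b * d * b := by rw [h2]
        _ = d * (b * (d * b)) := by simp only [mul_assoc]
        _ = d * (b * (a * c)) := by rw [h1']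
        _ = d * b * (a * c) := by simp only [mul_assoc]
    have hsq : (d * b) * (d * b) = (d * b) * (a * c) := by
      calc (d * b) * (d * b) = d * (b * (d * b)) := by simp only [mul_assoc]
        _ = d * (b * (a * c)) := by rw [h1']
        _ = d * b * (a * c) := by simp only [mul_assoc]
    set u := d * b with hu
    have hpow : ∀ j : ℕ, u ^ (j + 1) = u * (a * c) ^ j := by
      intro j
      induction j with
      | zero => simp
      | succ i ih =>
        calc u ^ (i + 2) = u ^ (i + 1) * u := pow_succ u (i + 1)
          _ = u * (a * c) ^ i * u := by rw [ih]
          _ = u * ((a * c) ^ i * u) := mul_assoc _ _ _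
          _ = u * (u * (a * c) ^ i) := by rw [(hc.pow_left i).eq]
          _ = (u * u) * (a * c) ^ i := (mul_assoc _ _ _).symm
          _ = (u * (a * c)) * (a * c) ^ i := by rw [hsq]
          _ = u * ((a * c) * (a * c) ^ i) := mul_assoc _ _ _
          _ = u * (a * c) ^ (i + 1) := by rw [← pow_succ']
    obtain ⟨m, hm⟩ := hnil
    set s := 1 - (a * c) ^ n with hs
    set t := a * c - (a * c) ^ (n + 1) with ht
    have hcs : Commute u s := Commute.sub_right (Commute.one_right u) (hc.symm.pow_right n)
    have hct : Commute u t := Commute.sub_right hc.symm (hc.symm.pow_right (n + 1))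
    have hst : Commute t s := by
      have h1c : Commute (a * c) s :=
        Commute.sub_right (Commute.one_right _) (Commute.pow_right rfl n)
      exact Commute.sub_left h1c (h1c.pow_left (n + 1))
    have hts : t = (a * c) * s := by
      rw [hs, ht, mul_sub, mul_one, ← pow_succ']
    have hv : u - u ^ (n + 1) = u * s := by
      rw [hpow n, hs, mul_sub, mul_one]
    have hv2 : (u * s) * (u * s) = u * t * s := by
      calc (u * s) * (u * s) = u * (s * u) * s := by simp only [mul_assoc]
        _ = u * (u * s) * s := by rw [hcs.symm.eq]
        _ = (u * u) * s * s := by simp only [mul_assoc]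
        _ = (u * (a * c)) * s * s := by rw [hsq]
        _ = u * ((a * c) * s) * s := by simp only [mul_assoc]
        _ = u * t * s := by rw [← hts]
    have hdb : IsNilpotent (u - u ^ (n + 1)) := by
      refine ⟨2 * m, ?_⟩
      rw [hv, pow_mul, sq, hv2]
      have e1 : (u * t * s) ^ m = (u * t) ^ m * s ^ m :=
        (Commute.mul_left hcs hst).mul_pow m
      have e2 : (u * t) ^ m = u ^ m * t ^ m := hct.mul_pow m
      rw [e1, e2, hm]
      simp
    set r := d - d * (b * d) ^ n with hr
    have hA : ∀ j : ℕ, d * (b * d) ^ j = (d * b) ^ j * d := by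
      intro j
      induction j with
      | zero => simp
      | succ i ih =>
        calc d * (b * d) ^ (i + 1) = d * ((b * d) ^ i * (b * d)) := by rw [pow_succ]
          _ = (d * (b * d) ^ i) * (b * d) := by simp only [mul_assoc]
          _ = ((d * b) ^ i * d) * (b * d) := by rw [ih]
          _ = (d * b) ^ i * (d * b) * d := by simp only [mul_assoc]
          _ = (d * b) ^ (i + 1) * d := by rw [pow_succ]
    have hbr : b * d - (b * d) ^ (n + 1) = b * r := by
      rw [hr, mul_sub]
      congr 1
      calc (b * d) ^ (n + 1) = (b * d) * (b * d) ^ n := pow_succ' _ _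
        _ = b * (d * (b * d) ^ n) := mul_assoc _ _ _
    have hrb : r * b = u - u ^ (n + 1) := by
      rw [hr, sub_mul, hu]
      congr 1
      calc d * (b * d) ^ n * b = (d * b) ^ n * d * b := by rw [hA]
        _ = (d * b) ^ n * (d * b) := by simp only [mul_assoc]
        _ = (d * b) ^ (n + 1) := (pow_succ _ _).symm
    obtain ⟨K, hK⟩ := hdb
    rw [← hrb] at hK
    have hBR : ∀ j : ℕ, (b * r) ^ (j + 1) = b * (r * b) ^ j * r := by
      intro j
      induction j with
      | zero => simp
      | succ i ih =>
        calc (b * r) ^ (i + 2) = (b * r) ^ (i + 1) * (b * r) := pow_succ _ _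
          _ = b * (r * b) ^ i * r * (b * r) := by rw [ih]
          _ = b * ((r * b) ^ i * (r * b)) * r := by simp only [mul_assoc]
          _ = b * (r * b) ^ (i + 1) * r := by rw [pow_succ]
    rw [hbr]
    exact ⟨K + 1, by rw [hBR K, hK, mul_zero, zero_mul]⟩
  refine ⟨hmain, fun _ => ?_⟩
  obtain ⟨k, rfl⟩ : ∃ k, n = k + 1 := ⟨n - 1, (Nat.succ_pred_eq_of_pos hn).symm⟩
  obtain ⟨y, hy1, hy2, hy3⟩ := aux_zhou_exists (b * d) k (by
    have : k + 1 + 1 = k + 2 := rfl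
    rw [this] at hmain
    exact hmain)
  exact ⟨y, hy1, hy2, k + 1, Nat.succ_pos k, hy3⟩
end

section
/- Let a,b,c,d ∈ R satisfy bdb = bac and dbd = acd. If 1 − ac has a Zhou inverse, then 1 − bd has a Zhou inverse. -/
/-- In a commutative ring, if `W - W^(n+1)` is nilpotent, there is `B` with
    `B*W*B = B` and `W^n - W*B` nilpotent. -/
lemma zhou_key {A : Type*} [CommRing A] (W : A) (n : ℕ) (hn : 0 < n)
    (h : IsNilpotent (W - W ^ (n + 1))) :
    ∃ B : A, B * W * B = B ∧ IsNilpotent (W ^ n - W * B) := by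
  obtain ⟨m, rfl⟩ : ∃ m, n = m + 1 := ⟨n - 1, (Nat.succ_pred_eq_of_pos hn).symm⟩
  set a : A := W ^ (m + 1) with ha
  -- a - a^2 is nilpotent
  have hq0 : IsNilpotent (a - a ^ 2) := by
    have hid : a - a ^ 2 = W ^ m * (W - W ^ (m + 1 + 1)) := by rw [ha]; ring
    rw [hid]
    exact (Commute.all _ _).isNilpotent_mul_left h
  obtain ⟨k0, hk0⟩ := hq0
  have hk : (a - a ^ 2) ^ (k0 + 1) = 0 := by rw [pow_succ, hk0, zero_mul]
  set t : A := 1 - a with ht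
  set x : A := a ^ (k0 + 1) with hx
  set y : A := t ^ (k0 + 1) with hy
  have hat : a * t = a - a ^ 2 := by rw [ht]; ring
  have hxy : x * y = 0 := by
    rw [hx, hy, ← mul_pow, hat, hk]
  -- geometric-sum identity
  have geom : ∀ s : A, s ^ (k0 + 1) - s = (s ^ 2 - s) * ∑ i ∈ Finset.range k0, s ^ i := by
    intro s
    have h' := geom_sum_mul s k0
    linear_combination (-s) * h'
  set Sa : A := ∑ i ∈ Finset.range k0, a ^ i with hSa
  set St : A := ∑ i ∈ Finset.range k0, t ^ i with hSt
  have geomA := geom a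
  have geomT := geom t
  have h2' : t ^ 2 - t = a ^ 2 - a := by rw [ht]; ring
  set z : A := 1 - (x + y) with hz
  have hzid : z = (a - a ^ 2) * (Sa + St) := by
    rw [hz, hx, hy]
    linear_combination -geomA - geomT - ht - St * h2'
  have hznil : IsNilpotent z := by
    rw [hzid]
    exact (Commute.all _ _).isNilpotent_mul_right ⟨k0 + 1, hk⟩
  set μ : A := x + y with hμ
  have hμu : IsUnit μ := by
    have hμz : μ = 1 - z := by rw [hz]; ring
    rw [hμz]
    exact hznil.isUnit_one_sub
  obtain ⟨u, hu⟩ := hμu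
  set ν : A := (↑u⁻¹ : A) with hν
  have hμν : μ * ν = 1 := by rw [← hu, hν]; exact u.mul_inv
  set e : A := x * ν with he
  have hx2 : x ^ 2 * ν = x := by
    have hxu : x * μ = x ^ 2 := by rw [hμ]; linear_combination hxy
    calc x ^ 2 * ν = x * μ * ν := by rw [hxu]
      _ = x * (μ * ν) := by ring
      _ = x := by rw [hμν, mul_one]
  have hee : e * e = e := by
    rw [he]; linear_combination ν * hx2
  -- a - e is nilpotent
  have haμ : a * μ - x = (a * t) * (t ^ k0 - a ^ k0) := by
    rw [hμ, hx, hy]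
    linear_combination (a ^ (k0 + 1)) * ht
  have hae : a - e = (a * μ - x) * ν := by
    rw [he]; linear_combination (-a) * hμν
  have hq : IsNilpotent (a - e) := by
    rw [hae, haμ, hat]
    apply (Commute.all _ _).isNilpotent_mul_right
    apply (Commute.all _ _).isNilpotent_mul_right
    exact ⟨k0 + 1, hk⟩
  -- the unit τ = a*e + (1-e)
  set τ : A := a * e + (1 - e) with hτ
  have hτid : τ = 1 + (a - e) * e := by rw [hτ]; linear_combination hee
  have hτu : IsUnit τ := by
    rw [hτid]
    exact ((Commute.all _ _).isNilpotent_mul_right hq).isUnit_one_add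
  obtain ⟨uτ, huτ⟩ := hτu
  set σ : A := (↑uτ⁻¹ : A) with hσ
  have hτσ : τ * σ = 1 := by rw [← huτ, hσ]; exact uτ.mul_inv
  have h5 : τ * e = a * e := by rw [hτ]; linear_combination (a - 1) * hee
  set B : A := W ^ m * (e * σ) with hB
  have hWB : W * B = e := by
    have hWa : W * B = a * (e * σ) := by
      rw [hB, ha, ← mul_assoc, ← pow_succ']
    rw [hWa]
    linear_combination e * hτσ - σ * h5
  refine ⟨B, ?_, ?_⟩
  · have hBW : B * W * B = (W * B) * B := by ring
    rw [hBW, hWB, hB]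
    linear_combination (W ^ m * σ) * hee
  · rw [hWB]
    exact hq

/-- If `w - w^(n+1)` is nilpotent for some `n > 0`, then `w` has a Zhou inverse. -/
lemma zhou_of_nilpotent {R : Type*} [Ring R] (w : R) (n : ℕ) (hn : 0 < n)
    (h : IsNilpotent (w - w ^ (n + 1))) : ∃ y : R, IsZhouInv w y := by
  letI : CommRing (Algebra.adjoin ℤ ({w} : Set R)) :=
    Algebra.adjoinCommRingOfComm ℤ (by
      rintro x hx y hy
      rw [Set.mem_singleton_iff] at hx hy
      rw [hx, hy])
  have hw : w ∈ Algebra.adjoin ℤ ({w} : Set R) := Algebra.subset_adjoin (Set.mem_singleton w)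
  obtain ⟨B, hB1, hB2⟩ := zhou_key (A := Algebra.adjoin ℤ ({w} : Set R))
    ⟨w, hw⟩ n hn (by
      obtain ⟨m, hm⟩ := h
      exact ⟨m, Subtype.ext hm⟩)
  refine ⟨(B : R), ?_, ?_, n, hn, ?_⟩
  · exact congrArg Subtype.val hB1
  · intro s hs
    have hmem : (B : R) ∈ Subalgebra.centralizer ℤ
        ((Subalgebra.centralizer ℤ ({w} : Set R) : Subalgebra ℤ R) : Set R) :=
      Algebra.adjoin_le_centralizer_centralizer ℤ ({w} : Set R) B.2
    rw [Subalgebra.mem_centralizer_iff] at hmem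
    have hsmem : s ∈ ((Subalgebra.centralizer ℤ ({w} : Set R) : Subalgebra ℤ R) : Set R) := by
      rw [SetLike.mem_coe, Subalgebra.mem_centralizer_iff]
      intro g hg
      rw [Set.mem_singleton_iff] at hg
      rw [hg]
      exact hs.symm
    exact (hmem s hsmem).symm
  · obtain ⟨m, hm⟩ := hB2
    exact ⟨m, congrArg Subtype.val hm⟩

/-- If `v` has a Zhou inverse, then `v - v^(n+1)` is nilpotent for some `n > 0`. -/
lemma exists_nilpotent_of_zhou {R : Type*} [Ring R] (v x : R) (h : IsZhouInv v x) :
    ∃ n : ℕ, 0 < n ∧ IsNilpotent (v - v ^ (n + 1)) := by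
  obtain ⟨hxvx, hc, n, hn, hq⟩ := h
  have hxv : Commute v x := ((hc v rfl).symm : v * x = x * v)
  set e : R := v * x with he
  set q : R := v ^ n - e with hqdef
  have hee : e * e = e := by
    rw [he]
    calc v * x * (v * x) = v * (x * v * x) := by
          rw [mul_assoc, ← mul_assoc x v x]
      _ = v * x := by rw [hxvx]
  have hve : Commute v e := (Commute.refl v).mul_right hxv
  have hvq : Commute v q := ((Commute.refl v).pow_right n).sub_right hve
  have hxq : Commute x q := hc q hvq.eq.symm
  have heq : Commute e q := hvq.mul_left hxq
  have h1e : (1 - e) * (1 - e) = 1 - e := by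
    calc (1 - e) * (1 - e) = 1 - e - e + e * e := by noncomm_ring
      _ = 1 - e := by rw [hee]; abel
  have hpow1e : (1 - e) ^ n = 1 - e := by
    obtain ⟨m, rfl⟩ : ∃ m, n = m + 1 := ⟨n - 1, (Nat.succ_pred_eq_of_pos hn).symm⟩
    exact IsIdempotentElem.pow_succ_eq m h1e
  have hveq : v ^ n = q + e := by rw [hqdef]; abel
  have h1 : (v * (1 - e)) ^ n = q * (1 - e) := by
    rw [((Commute.one_right v).sub_right hve).mul_pow, hpow1e, hveq]
    calc (q + e) * (1 - e) = q * (1 - e) + (e - e * e) := by noncomm_ring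
      _ = q * (1 - e) := by rw [hee]; abel
  have h2 : IsNilpotent (v * (1 - e)) := by
    apply IsNilpotent.of_pow (m := n)
    rw [h1]
    exact ((Commute.one_right q).sub_right heq.symm).isNilpotent_mul_right hq
  have h3 : IsNilpotent (v * q) := hvq.isNilpotent_mul_left hq
  have h4 : v - v ^ (n + 1) = v * (1 - e) - v * q := by
    rw [pow_succ', hveq]; noncomm_ring
  refine ⟨n, hn, ?_⟩
  rw [h4]
  have hcomm : Commute (v * (1 - e)) (v * q) := by
    have c1 : Commute v (v * q) := (Commute.refl v).mul_right hvq
    have c2 : Commute (1 - e) (v * q) :=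
      ((Commute.one_left v).sub_left hve.symm).mul_right
        ((Commute.one_left q).sub_left heq)
    exact c1.mul_left c2
  exact hcomm.isNilpotent_sub h2 h3

theorem stmt17 {R : Type*} [Ring R] (a b c d : R)
    (h1 : b * d * b = b * (a * c)) (h2 : d * b * d = a * c * d)
    (h : ∃ x : R, IsZhouInv (1 - a * c) x) :
    ∃ y : R, IsZhouInv (1 - b * d) y := by
  obtain ⟨x, hx⟩ := h
  obtain ⟨n, hn, hnil⟩ := exists_nilpotent_of_zhou (1 - a * c) x hx
  set v : R := 1 - a * c with hv
  set w : R := 1 - b * d with hwdef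
  apply zhou_of_nilpotent w n hn
  -- intertwining relations
  have hdw : d * w = v * d := by
    rw [hwdef, hv, mul_sub, sub_mul, mul_one, one_mul, ← mul_assoc, h2]
  have hdwk : ∀ k : ℕ, d * w ^ k = v ^ k * d := by
    intro k
    induction k with
    | zero => simp
    | succ k ih =>
      rw [pow_succ, pow_succ, ← mul_assoc, ih, mul_assoc, hdw, ← mul_assoc]
  set S : R := ∑ i ∈ Finset.range n, w ^ i with hS
  have hbd : (1 : R) - w = b * d := by rw [hwdef]; abel
  set E : R := w - w ^ (n + 1) with hE
  have h7 : S * (1 - w) = 1 - w ^ n := by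
    have hg := geom_sum_mul w n
    rw [mul_sub, mul_one] at hg ⊢
    rw [← neg_sub (S * w) S, hg, neg_sub]
  have hEid : E = w * S * (b * d) := by
    rw [hE, ← hbd, pow_succ', mul_assoc, h7, mul_sub, mul_one]
  set F : R := v - v ^ (n + 1) with hF
  have hdE : d * E = F * d := by
    rw [hE, hF, mul_sub, sub_mul, hdw, hdwk (n + 1)]
  have hdEk : ∀ k : ℕ, d * E ^ k = F ^ k * d := by
    intro k
    induction k with
    | zero => simp
    | succ k ih =>
      rw [pow_succ, pow_succ, ← mul_assoc, ih, mul_assoc, hdE, ← mul_assoc]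
  obtain ⟨m, hm⟩ := hnil
  refine ⟨m + 1, ?_⟩
  show E ^ (m + 1) = 0
  nth_rewrite 1 [pow_succ']
  nth_rewrite 1 [hEid]
  rw [mul_assoc (w * S), mul_assoc b, hdEk m, hm, zero_mul, mul_zero, mul_zero]
end

section
/- An element a of a ring R has a Zhou inverse if and only if there exists an idempotent p commuting with a such that a^n − p is nilpotent for some n ∈ ℕ (and in that case p can be taken in comm²(a)). -/
private lemma squeezeL {R : Type*} [Ring R] {u v w z : R} (hvu : v * u = 1)
    (huz : u * z = z * w) {k : ℕ} (hw : w ^ k = 0) : z = 0 := by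
  have key : ∀ m : ℕ, z = v ^ m * z * w ^ m := by
    intro m
    induction m with
    | zero => simp
    | succ m ih =>
      have hz : z = v * z * w := by
        calc z = (v * u) * z := by rw [hvu, one_mul]
        _ = v * (z * w) := by rw [mul_assoc, huz]
        _ = v * z * w := by rw [mul_assoc]
      calc z = v ^ m * z * w ^ m := ih
      _ = v ^ m * (v * z * w) * w ^ m := by rw [← hz]
      _ = v ^ (m + 1) * z * w ^ (m + 1) := by
          rw [pow_succ, pow_succ']; noncomm_ring
  have := key k
  rw [hw, mul_zero] at this
  exact this

private lemma squeezeR {R : Type*} [Ring R] {u v w z : R} (huv : u * v = 1)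
    (huz : z * u = w * z) {k : ℕ} (hw : w ^ k = 0) : z = 0 := by
  have key : ∀ m : ℕ, z = w ^ m * z * v ^ m := by
    intro m
    induction m with
    | zero => simp
    | succ m ih =>
      have hz : z = w * z * v := by
        calc z = z * (u * v) := by rw [huv, mul_one]
        _ = (z * u) * v := by rw [mul_assoc]
        _ = w * z * v := by rw [huz]
      calc z = w ^ m * z * v ^ m := ih
      _ = w ^ m * (w * z * v) * v ^ m := by rw [← hz]
      _ = w ^ (m + 1) * z * v ^ (m + 1) := by
          rw [pow_succ, pow_succ']; noncomm_ring
  have := key k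
  rw [hw, zero_mul, zero_mul] at this
  exact this

/-- The spectral idempotent lies in the double commutant. -/
private lemma p_comm2 {R : Type*} [Ring R] {a p : R} (hp : p * p = p)
    (hpa : p * a = a * p) {n : ℕ} (hnil : IsNilpotent (a ^ n - p)) :
    inComm2 a p := by
  intro y hy
  obtain ⟨k, hk⟩ := hnil
  set w := a ^ n - p with hw
  have hcw : a ^ n = p + w := by rw [hw]; abel
  have cpa : Commute p a := hpa
  have cya : Commute y a := hy
  have cpc : Commute p (a ^ n) := cpa.pow_right n
  have cyc : Commute y (a ^ n) := cya.pow_right n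
  have cpw : Commute p w := cpc.sub_right (Commute.refl p)
  -- the unit 1 + w
  have hu : IsUnit (1 + w) := IsNilpotent.isUnit_one_add ⟨k, hk⟩
  obtain ⟨U, hU⟩ := hu
  set v := ((U⁻¹ : Rˣ) : R) with hv
  have hvu : v * (1 + w) = 1 := by rw [hv, ← hU]; exact U.inv_mul
  have huv : (1 + w) * v = 1 := by rw [hv, ← hU]; exact U.mul_inv
  -- z := p * y * (1-p) is 0
  have hpz : p * (p * y * (1 - p)) = p * y * (1 - p) := by
    rw [← mul_assoc, ← mul_assoc, hp]
  have hzp : p * y * (1 - p) * p = 0 := by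
    rw [mul_assoc, sub_mul, one_mul, hp, sub_self, mul_zero]
  have hcz : a ^ n * (p * y * (1 - p)) = (p * y * (1 - p)) * a ^ n := by
    exact ((cpc.symm.mul_right cyc.symm).mul_right
      ((Commute.one_right (a ^ n)).sub_right cpc.symm)).eq
  have h1 : a ^ n * (p * y * (1 - p)) = p * y * (1 - p) + w * (p * y * (1 - p)) := by
    rw [hcw, add_mul, hpz]
  have h2 : (p * y * (1 - p)) * a ^ n = (p * y * (1 - p)) * w := by
    rw [hcw, mul_add, hzp, zero_add]
  have huz : (1 + w) * (p * y * (1 - p)) = (p * y * (1 - p)) * w := by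
    calc (1 + w) * (p * y * (1 - p))
        = p * y * (1 - p) + w * (p * y * (1 - p)) := by rw [add_mul, one_mul]
    _ = a ^ n * (p * y * (1 - p)) := h1.symm
    _ = (p * y * (1 - p)) * a ^ n := hcz
    _ = (p * y * (1 - p)) * w := h2
  have hz0 : p * y * (1 - p) = 0 := squeezeL hvu huz hk
  -- z' := (1-p) * y * p is 0
  have hz'p : (1 - p) * y * p * p = (1 - p) * y * p := by rw [mul_assoc, hp]
  have hpz' : p * ((1 - p) * y * p) = 0 := by
    rw [← mul_assoc, ← mul_assoc, mul_sub, mul_one, hp, sub_self, zero_mul, zero_mul]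
  have hcz' : a ^ n * ((1 - p) * y * p) = ((1 - p) * y * p) * a ^ n := by
    exact ((((Commute.one_right (a ^ n)).sub_right cpc.symm).mul_right
      cyc.symm).mul_right cpc.symm).eq
  have h1' : ((1 - p) * y * p) * a ^ n = (1 - p) * y * p + ((1 - p) * y * p) * w := by
    rw [hcw, mul_add, hz'p]
  have h2' : a ^ n * ((1 - p) * y * p) = w * ((1 - p) * y * p) := by
    rw [hcw, add_mul, hpz', zero_add]
  have huz' : ((1 - p) * y * p) * (1 + w) = w * ((1 - p) * y * p) := by
    calc ((1 - p) * y * p) * (1 + w)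
        = (1 - p) * y * p + ((1 - p) * y * p) * w := by rw [mul_add, mul_one]
    _ = ((1 - p) * y * p) * a ^ n := h1'.symm
    _ = a ^ n * ((1 - p) * y * p) := hcz'.symm
    _ = w * ((1 - p) * y * p) := h2'
  have hz'0 : (1 - p) * y * p = 0 := squeezeR huv huz' hk
  -- conclude
  have e1 : p * y = p * y * p := by
    rw [mul_sub, mul_one, sub_eq_zero] at hz0
    exact hz0
  have e2 : y * p = p * y * p := by
    rw [sub_mul, one_mul, sub_mul, sub_eq_zero] at hz'0
    exact hz'0
  rw [e1, e2]

theorem stmt18 {R : Type*} [Ring R] (a : R) :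
    ((∃ b : R, IsZhouInv a b) ↔
      ∃ p : R, p * p = p ∧ p * a = a * p ∧ ∃ n : ℕ, 0 < n ∧ IsNilpotent (a ^ n - p)) ∧
    ((∃ b : R, IsZhouInv a b) →
      ∃ p : R, p * p = p ∧ inComm2 a p ∧ ∃ n : ℕ, 0 < n ∧ IsNilpotent (a ^ n - p)) := by
  have fwd : (∃ b : R, IsZhouInv a b) →
      ∃ p : R, p * p = p ∧ inComm2 a p ∧ ∃ n : ℕ, 0 < n ∧ IsNilpotent (a ^ n - p) := by
    rintro ⟨b, hbab, hbc, n, hn, hnil⟩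
    have hab : b * a = a * b := hbc a rfl
    refine ⟨a * b, ?_, ?_, n, hn, hnil⟩
    · calc a * b * (a * b) = a * (b * a * b) := by noncomm_ring
      _ = a * b := by rw [hbab]
    · intro y hy
      have hby : b * y = y * b := hbc y hy
      calc a * b * y = a * (b * y) := by rw [mul_assoc]
      _ = a * (y * b) := by rw [hby]
      _ = a * y * b := by rw [mul_assoc]
      _ = y * a * b := by rw [← hy]
      _ = y * (a * b) := by rw [mul_assoc]
  have bwd : (∃ p : R, p * p = p ∧ p * a = a * p ∧ ∃ n : ℕ, 0 < n ∧ IsNilpotent (a ^ n - p)) →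
      ∃ b : R, IsZhouInv a b := by
    rintro ⟨p, hp, hpa, n, hn, hnil⟩
    set w := a ^ n - p with hw
    obtain ⟨k, hk⟩ := hnil
    have hcw : a ^ n = p + w := by rw [hw]; abel
    have cpa : Commute p a := hpa
    have cpc : Commute p (a ^ n) := cpa.pow_right n
    have cpw : Commute p w := cpc.sub_right (Commute.refl p)
    have caw : Commute a w := ((Commute.refl a).pow_right n).sub_right cpa.symm
    have hu : IsUnit (1 + w) := IsNilpotent.isUnit_one_add ⟨k, hk⟩
    obtain ⟨U, hU⟩ := hu
    set v := ((U⁻¹ : Rˣ) : R) with hv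
    have hvu : v * (1 + w) = 1 := by rw [hv, ← hU]; exact U.inv_mul
    have huv : (1 + w) * v = 1 := by rw [hv, ← hU]; exact U.mul_inv
    have vcomm : ∀ y : R, Commute y w → Commute y v := by
      intro y hyw
      have hyu : Commute y (U : R) := by
        rw [hU]; exact (Commute.one_right y).add_right hyw
      exact hyu.units_inv_right
    have cav : Commute a v := vcomm a caw
    have cpv : Commute p v := vcomm p cpw
    have hba : a ^ (n - 1) * p * v * a = p := by
      calc a ^ (n - 1) * p * v * a = a ^ (n - 1) * p * (v * a) := by rw [mul_assoc]
      _ = a ^ (n - 1) * p * (a * v) := by rw [cav.symm.eq]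
      _ = a ^ (n - 1) * (p * a) * v := by
          rw [← mul_assoc, mul_assoc (a ^ (n - 1)) p a]
      _ = a ^ (n - 1) * (a * p) * v := by rw [hpa]
      _ = a ^ n * p * v := by
          rw [← mul_assoc, mul_assoc (a ^ (n - 1)) a p, ← mul_assoc, ← pow_succ,
            Nat.sub_add_cancel hn]
      _ = (p + w) * p * v := by rw [hcw]
      _ = p * (1 + w) * v := by
          congr 1
          rw [add_mul, hp, mul_add, mul_one, cpw.eq]
      _ = p * ((1 + w) * v) := by rw [mul_assoc]
      _ = p := by rw [huv, mul_one]
    have cab : Commute a (a ^ (n - 1) * p * v) :=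
      (((Commute.refl a).pow_right (n - 1)).mul_right cpa.symm).mul_right cav
    have hab : a * (a ^ (n - 1) * p * v) = p := by rw [cab.eq, hba]
    refine ⟨a ^ (n - 1) * p * v, ?_, ?_, n, hn, ?_⟩
    · -- b * a * b = b
      rw [hba]
      have hpan : Commute p (a ^ (n - 1)) := cpa.pow_right (n - 1)
      rw [← mul_assoc, ← mul_assoc, hpan.eq, mul_assoc (a ^ (n - 1)), hp]
    · -- b ∈ comm²(a)
      intro y hy
      have hyp : p * y = y * p := p_comm2 hp hpa (n := n) ⟨k, hk⟩ y hy
      have cyp : Commute y p := hyp.symm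
      have cya : Commute y a := hy
      have cyw : Commute y w := (cya.pow_right n).sub_right cyp
      have cyv : Commute y v := vcomm y cyw
      exact (((cya.pow_right (n - 1)).mul_right cyp).mul_right cyv).symm.eq
    · rw [hab]
      exact ⟨k, hk⟩
  refine ⟨⟨fun h => ?_, bwd⟩, fwd⟩
  obtain ⟨p, h1, h2, h3⟩ := fwd h
  exact ⟨p, h1, h2 a rfl, h3⟩
end

section
/- If a has a Zhou inverse, then the idempotent witnessing it is unique: if p, q are idempotents in comm²(a) with a^n − p nilpotent and a^m − q nilpotent for some n, m ∈ ℕ, then p = q. -/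
/-- If `x - e` is nilpotent, `x` commutes with `e`, and `e` is idempotent, then
`x ^ m - e` is nilpotent for any positive `m`. -/
lemma nilp_pow_sub {R : Type*} [Ring R] {x e : R} (h : Commute x e)
    (he : e * e = e) {m : ℕ} (hm : 0 < m) (hx : IsNilpotent (x - e)) :
    IsNilpotent (x ^ m - e) := by
  have hem : e ^ m = e := by
    obtain ⟨k, rfl⟩ := Nat.exists_eq_succ_of_ne_zero hm.ne'
    exact IsIdempotentElem.pow_succ_eq k he
  have key := h.mul_geom_sum₂ m
  rw [hem] at key
  rw [← key]
  refine Commute.isNilpotent_mul_right ?_ hx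
  apply Commute.sum_right
  intro i _
  exact (((Commute.refl x).sub_left h.symm).pow_right i).mul_right
    ((h.sub_left (Commute.refl e)).pow_right _)

theorem stmt19 {R : Type*} [Ring R] (a p q : R)
    (ha : ∃ b : R, IsZhouInv a b)
    (hp : p * p = p) (hpc : inComm2 a p) (hq : q * q = q) (hqc : inComm2 a q)
    (hn : ∃ n : ℕ, 0 < n ∧ IsNilpotent (a ^ n - p))
    (hm : ∃ m : ℕ, 0 < m ∧ IsNilpotent (a ^ m - q)) : p = q := by
  obtain ⟨n, hn0, hnp⟩ := hn
  obtain ⟨m, hm0, hmq⟩ := hm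
  have hap : Commute a p := (hpc a rfl).symm
  have haq : Commute a q := (hqc a rfl).symm
  have hpq : Commute p q := hpc q haq.symm
  have hqp : Commute q p := hpq.symm
  -- a ^ (n * m) - p and a ^ (n * m) - q are nilpotent
  have h1 : IsNilpotent (a ^ (n * m) - p) := by
    have := nilp_pow_sub (x := a ^ n) (e := p) (hap.pow_left n) hp hm0 hnp
    rwa [← pow_mul] at this
  have h2 : IsNilpotent (a ^ (n * m) - q) := by
    have := nilp_pow_sub (x := a ^ m) (e := q) (haq.pow_left m) hq hn0 hmq
    rwa [← pow_mul, Nat.mul_comm] at this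
  -- p - q is nilpotent
  have h3 : Commute p (a ^ (n * m)) := hap.symm.pow_right _
  have h4 : Commute q (a ^ (n * m)) := haq.symm.pow_right _
  have hcomm : Commute (p - a ^ (n * m)) (a ^ (n * m) - q) :=
    (h3.sub_right hpq).sub_left ((Commute.refl _).sub_right h4.symm)
  have hnil : IsNilpotent (p - q) := by
    have := hcomm.isNilpotent_add (by simpa using h1.neg) h2
    simpa [sub_add_sub_cancel] using this
  -- p - p * q is an idempotent and nilpotent, hence zero
  have e1 : p * q * p = p * q := by rw [mul_assoc, ← hpq.eq, ← mul_assoc, hp]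
  have e2 : p * q * (p * q) = p * q := by rw [← mul_assoc, e1, mul_assoc, hq]
  have xidem : (p - p * q) * (p - p * q) = p - p * q := by
    have expand : (p - p * q) * (p - p * q)
        = p * p - p * (p * q) - (p * q * p - p * q * (p * q)) := by noncomm_ring
    rw [expand, hp, ← mul_assoc p p q, hp, e1, e2]
    abel
  have xeq : (p - q) * (1 - q) = p - p * q := by
    rw [mul_one_sub, sub_mul, hq]
    abel
  have hxnil : IsNilpotent (p - p * q) := by
    rw [← xeq]
    exact Commute.isNilpotent_mul_right
      ((Commute.one_right (p - q)).sub_right (hpq.sub_left (Commute.refl q))) hnil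
  have hx0 : p - p * q = 0 := IsIdempotentElem.eq_zero_of_isNilpotent xidem hxnil
  -- q - p * q is an idempotent and nilpotent, hence zero
  have f1 : p * q * q = p * q := by rw [mul_assoc, hq]
  have f2 : q * (p * q) = p * q := by rw [← mul_assoc, ← hpq.eq, mul_assoc, hq]
  have yidem : (q - p * q) * (q - p * q) = q - p * q := by
    have expand : (q - p * q) * (q - p * q)
        = q * q - q * (p * q) - (p * q * q - p * q * (p * q)) := by noncomm_ring
    rw [expand, hq, f2, f1, e2]
    abel
  have yeq : (1 - p) * (q - p) = q - p * q := by
    rw [one_sub_mul, mul_sub, hp]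
    abel
  have hynil : IsNilpotent (q - p * q) := by
    rw [← yeq]
    refine Commute.isNilpotent_mul_left ?_ (by simpa using hnil.neg)
    exact (Commute.one_left (q - p)).sub_left (hpq.sub_right (Commute.refl p))
  have hy0 : q - p * q = 0 := IsIdempotentElem.eq_zero_of_isNilpotent yidem hynil
  exact (sub_eq_zero.mp hx0).trans (sub_eq_zero.mp hy0).symm
end
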